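/- arXiv:1807.11693 — 5 statements merged into one kernel-verified Lean document; each statement's English description precedes it below -/
import Mathlib

section
/- Let P(x) = ∑_{n=0}^{N−1} a_n x^n be a degree N−1 polynomial with coefficients ±1 such that x^{N−1}P(1/x) = ±P(x), and let S_k denote the sum of the k-th powers of the roots of P. If a_0 = a_1 = ⋯ = a_{i−1} = 1 and a_i = −1 for some 2 ≤ i ≤ N−1, then S_0 = S_1 = ⋯ = S_{i−1} = −1 and S_i = 2i − 1. -/
/-!
Newton's identities are naturally stated for the reversed polynomial: if `c_j` are the
coefficients of `x ^ n P(1/x)` and `S_k` the power sums of the roots of `P`, then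
`∑_{j<k} c_j S_{k-j} + k c_k = 0` for every `k` (past the degree both `c_j` and the elementary
symmetric functions vanish). Self-reciprocity `x ^ n P(1/x) = ±P` lets us use the coefficients
of `P` itself. If `c_0 = ⋯ = c_{i-1} = 1`, the recurrence gives `S_k = k - 1 - k c_k` for
`1 ≤ k ≤ i` by strong induction, i.e. `S_k = -1` for `k < i` and `S_i = 2i - 1` when `c_i = -1`.
-/

open Polynomial

theorem Multiset.mul_esymm_eq_sum {R : Type*} [CommRing R] (s : Multiset R) (k : ℕ) :
    k * s.esymm k = (-1) ^ (k + 1) *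
      ∑ j ∈ Finset.range k, (-1) ^ j * s.esymm j * (s.map (· ^ (k - j))).sum := by
  obtain ⟨n, f, rfl⟩ : ∃ n, ∃ f : Fin n → R, s = Finset.univ.val.map f := by
    induction s using Quotient.inductionOn with
    | h l => exact ⟨l.length, l.get, by rw [Fin.univ_val_map, List.ofFn_get]; rfl⟩
  have h := congrArg (MvPolynomial.eval f) (MvPolynomial.mul_esymm_eq_sum (Fin n) R k)
  rw [Finset.sum_filter, Finset.Nat.sum_antidiagonal_eq_sum_range_succ (fun i j =>
      if i < k then (-1) ^ i * MvPolynomial.esymm (Fin n) R i * MvPolynomial.psum (Fin n) R j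
      else 0),
    Finset.sum_range_succ, if_neg (lt_irrefl k), add_zero,
    Finset.sum_congr rfl fun j hj => if_pos (Finset.mem_range.mp hj)] at h
  have hesymm (m : ℕ) : MvPolynomial.eval f (MvPolynomial.esymm (Fin n) R m) =
      (Finset.univ.val.map f).esymm m :=
    MvPolynomial.aeval_esymm_eq_multiset_esymm (Fin n) R m f
  have hpsum (m : ℕ) : MvPolynomial.eval f (MvPolynomial.psum (Fin n) R m) =
      ((Finset.univ.val.map f).map (· ^ m)).sum := by
    rw [Multiset.map_map, Finset.sum_map_val]
    simp only [MvPolynomial.psum, map_sum, map_pow, MvPolynomial.eval_X, Function.comp_apply]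
  simpa only [map_mul, map_sum, map_pow, map_neg, map_one, map_natCast, hpsum, hesymm] using h

def NewtonRecurrence {R : Type*} [CommRing R] (c S : ℕ → R) : Prop :=
  ∀ k, ∑ j ∈ Finset.range k, c j * S (k - j) + k * c k = 0

namespace Polynomial

theorem reverse_map_of_injective {R S : Type*} [Semiring R] [Semiring S] {f : R →+* S}
    (hf : Function.Injective f) (p : R[X]) : (p.map f).reverse = p.reverse.map f := by
  ext j
  simp only [coeff_reverse, coeff_map, natDegree_map_eq_of_injective hf]

variable {R : Type*} [CommRing R] [IsDomain R] {p : R[X]}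

theorem coeff_reverse_eq_esymm_roots (hroots : p.roots.card = p.natDegree) (j : ℕ) :
    p.reverse.coeff j = p.leadingCoeff * (-1) ^ j * p.roots.esymm j := by
  rcases le_or_gt j p.natDegree with hj | hj
  · rw [coeff_reverse, revAt_le hj, coeff_eq_esymm_roots_of_card hroots (Nat.sub_le _ _),
      Nat.sub_sub_self hj]
  · rw [coeff_eq_zero_of_natDegree_lt (p.reverse_natDegree_le.trans_lt hj), Multiset.esymm,
      Multiset.powersetCard_eq_empty _ (hroots ▸ hj), Multiset.map_zero, Multiset.sum_zero,
      mul_zero]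

theorem newtonRecurrence_coeff_reverse (hroots : p.roots.card = p.natDegree) :
    NewtonRecurrence p.reverse.coeff fun k => (p.roots.map (· ^ k)).sum := by
  intro k
  have hnewton := p.roots.mul_esymm_eq_sum k
  have hsign : ((-1 : R) ^ k) ^ 2 = 1 := by rw [← pow_mul, pow_mul', neg_one_sq, one_pow]
  simp only [coeff_reverse_eq_esymm_roots hroots, mul_assoc, ← Finset.mul_sum] at hnewton ⊢
  linear_combination (p.leadingCoeff * (-1) ^ k) * hnewton -
    p.leadingCoeff * (∑ j ∈ Finset.range k, (-1) ^ j * (p.roots.esymm j *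
      (p.roots.map (· ^ (k - j))).sum)) * hsign

theorem newtonRecurrence_coeff_of_reverse_eq (hroots : p.roots.card = p.natDegree)
    (hrecip : p.reverse = p ∨ p.reverse = -p) :
    NewtonRecurrence p.coeff fun k => (p.roots.map (· ^ k)).sum := by
  intro k
  have hnewton := newtonRecurrence_coeff_reverse hroots k
  rcases hrecip with h | h <;> rw [h] at hnewton
  · exact hnewton
  · simpa only [coeff_neg, neg_mul, mul_neg, Finset.sum_neg_distrib, ← neg_add, neg_eq_zero]
      using hnewton

end Polynomial

namespace NewtonRecurrence

variable {R : Type*} [CommRing R] {c S : ℕ → R}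

theorem eq_sub_mul_coeff (hnewton : NewtonRecurrence c S) {k : ℕ} (hk : 1 ≤ k)
    (hc : ∀ j < k, c j = 1) (hS : ∀ m, 1 ≤ m → m < k → S m = -1) :
    S k = k - 1 - k * c k := by
  obtain ⟨n, rfl⟩ := Nat.exists_eq_add_of_le' hk
  have hsum : ∑ j ∈ Finset.range n, c (j + 1) * S (n + 1 - (j + 1)) =
      ∑ _j ∈ Finset.range n, (-1 : R) := by
    refine Finset.sum_congr rfl fun j hj => ?_
    rw [Finset.mem_range] at hj
    rw [hc (j + 1) (by omega), hS _ (by omega) (by omega), one_mul]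
  have := hnewton (n + 1)
  rw [Finset.sum_range_succ', hsum, Finset.sum_const, Finset.card_range, nsmul_eq_mul,
    hc 0 (by omega)] at this
  push_cast at this ⊢
  linear_combination this

theorem eq_neg_one_of_coeff_eq_one (hnewton : NewtonRecurrence c S) {i : ℕ}
    (hc : ∀ j < i, c j = 1) {k : ℕ} (hk : 1 ≤ k) (hki : k < i) : S k = -1 := by
  induction k using Nat.strong_induction_on with
  | _ k ih =>
    rw [hnewton.eq_sub_mul_coeff hk (fun j hj => hc j (hj.trans hki))
      (fun m hm hmk => ih m hmk hm (hmk.trans hki)), hc k hki]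
    ring

end NewtonRecurrence

theorem power_sums_of_littlewood_cyclotomic_general (i : ℕ) (P : Polynomial ℤ)
    (hrecip : P.reverse = P ∨ P.reverse = -P)
    (hi1 : 2 ≤ i)
    (hones : ∀ n < i, P.coeff n = 1) (hneg : P.coeff i = -1)
    (S : ℕ → ℂ)
    (hS : ∀ k, S k = (((P.map (Int.castRingHom ℂ)).roots).map (fun r => r ^ k)).sum) :
    (∀ k, 1 ≤ k → k ≤ i - 1 → S k = -1) ∧ S i = 2 * i - 1 := by
  set Q := P.map (Int.castRingHom ℂ)
  have hrecipQ : Q.reverse = Q ∨ Q.reverse = -Q := by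
    rw [reverse_map_of_injective (RingHom.injective_int _)]
    rcases hrecip with h | h <;> simp [h, Q]
  have hnewton : NewtonRecurrence (fun j => (P.coeff j : ℂ)) S := by
    simpa [NewtonRecurrence, hS, Q] using
      newtonRecurrence_coeff_of_reverse_eq IsAlgClosed.card_roots_eq_natDegree hrecipQ
  have hc : ∀ j < i, (P.coeff j : ℂ) = 1 := fun j hj => by simp [hones j hj]
  have hbelow (k : ℕ) (hk : 1 ≤ k) (hki : k < i) : S k = -1 :=
    hnewton.eq_neg_one_of_coeff_eq_one hc hk hki
  refine ⟨fun k hk hki => hbelow k hk (by omega), ?_⟩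
  rw [hnewton.eq_sub_mul_coeff (by omega) hc hbelow, hneg]
  push_cast
  ring

theorem power_sums_of_littlewood_cyclotomic (N i : ℕ) (P : Polynomial ℤ) (hN : 2 ≤ N)
    (hdeg : P.natDegree = N - 1)
    (hcoeff : ∀ n ≤ N - 1, P.coeff n = 1 ∨ P.coeff n = -1)
    (hrecip : P.reverse = P ∨ P.reverse = -P)
    (hi1 : 2 ≤ i) (hi2 : i ≤ N - 1)
    (hones : ∀ n < i, P.coeff n = 1) (hneg : P.coeff i = -1)
    (S : ℕ → ℂ)
    (hS : ∀ k, S k = (((P.map (Int.castRingHom ℂ)).roots).map (fun r => r ^ k)).sum) :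
    (∀ k, 1 ≤ k → k ≤ i - 1 → S k = -1) ∧ S i = 2 * i - 1 :=
  power_sums_of_littlewood_cyclotomic_general i P hrecip hi1 hones hneg S hS
end

section
/- Let i ≥ 1, k = m·i + j with 1 ≤ j ≤ i − 1 and m ≥ 0. If v_2(k) ≥ v_2(i), then v_2((m+1)i + j) ≠ v_2(mi + j), where v_2 denotes the 2-adic valuation. -/
/-!
Write `a = k` and `b = i`, so that `(m + 1) * i + j = a + b` with `v₂(b) ≤ v₂(a)`. If the inequality
is strict, the ultrametric inequality is an equality: `v₂(a + b) = v₂(b) < v₂(a)`. If it is an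
equality `v₂(a) = v₂(b) = v`, then `a / 2^v` and `b / 2^v` are both odd, so their sum is even and
`v₂(a + b) > v`.
-/

lemma padicValNat_add_eq_of_lt {p a b : ℕ} [Fact p.Prime] (ha : a ≠ 0) (hb : b ≠ 0)
    (h : padicValNat p a < padicValNat p b) : padicValNat p (a + b) = padicValNat p a := by
  have hq : padicValRat p ((a : ℚ) + b) = padicValRat p a :=
    padicValRat.add_eq_of_lt (by positivity) (by simpa using ha) (by simpa using hb)
      (by simpa only [padicValRat.of_nat, Nat.cast_lt] using h)
  rw [← Nat.cast_add, padicValRat.of_nat, padicValRat.of_nat] at hq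
  exact_mod_cast hq

lemma two_pow_padicValNat_succ_dvd_add_of_eq {a b : ℕ} (ha : a ≠ 0) (hb : b ≠ 0)
    (h : padicValNat 2 a = padicValNat 2 b) : 2 ^ (padicValNat 2 a + 1) ∣ a + b := by
  set v := padicValNat 2 a
  obtain ⟨a', ha'⟩ : 2 ^ v ∣ a := pow_padicValNat_dvd
  obtain ⟨b', hb'⟩ : 2 ^ v ∣ b := h ▸ pow_padicValNat_dvd
  have not_two_dvd_cofactor {n n' : ℕ} (hn : n ≠ 0) (hv : padicValNat 2 n = v) (hn' : n = 2 ^ v * n') :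
      ¬ 2 ∣ n' := fun h2 =>
    pow_succ_padicValNat_not_dvd hn (hv ▸ hn' ▸ pow_succ 2 v ▸ mul_dvd_mul_left _ h2)
  have hsum : 2 ∣ a' + b' := by
    have := not_two_dvd_cofactor ha rfl ha'
    have := not_two_dvd_cofactor hb h.symm hb'
    omega
  rw [ha', hb', ← mul_add, pow_succ]
  exact mul_dvd_mul_left _ hsum

lemma padicValNat_two_lt_add_of_eq {a b : ℕ} (ha : a ≠ 0) (hb : b ≠ 0)
    (h : padicValNat 2 a = padicValNat 2 b) : padicValNat 2 a < padicValNat 2 (a + b) :=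
  Nat.lt_of_succ_le <|
    (padicValNat_dvd_iff_le (by omega)).mp (two_pow_padicValNat_succ_dvd_add_of_eq ha hb h)

lemma padicValNat_two_add_ne_of_le {a b : ℕ} (ha : a ≠ 0) (hb : b ≠ 0)
    (h : padicValNat 2 b ≤ padicValNat 2 a) : padicValNat 2 (a + b) ≠ padicValNat 2 a := by
  rcases h.lt_or_eq with hlt | heq
  · rw [add_comm, padicValNat_add_eq_of_lt hb ha hlt]
    exact hlt.ne
  · exact (padicValNat_two_lt_add_of_eq ha hb heq.symm).ne'

theorem v2_succ_block_ne_general (i j m k : ℕ) (hi : 1 ≤ i) (hj1 : 1 ≤ j)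
    (hk : k = m * i + j) (h : padicValNat 2 i ≤ padicValNat 2 k) :
    padicValNat 2 ((m + 1) * i + j) ≠ padicValNat 2 (m * i + j) := by
  subst hk
  rw [show (m + 1) * i + j = (m * i + j) + i by ring]
  exact padicValNat_two_add_ne_of_le (by omega) (by omega) h

theorem v2_succ_block_ne (i j m k : ℕ) (hi : 1 ≤ i) (hj1 : 1 ≤ j) (hj2 : j ≤ i - 1)
    (hk : k = m * i + j) (h : padicValNat 2 i ≤ padicValNat 2 k) :
    padicValNat 2 ((m + 1) * i + j) ≠ padicValNat 2 (m * i + j) :=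
  v2_succ_block_ne_general i j m k hi hj1 hk h
end

section
/- Let t ≥ 0 and let w = (w_0, w_1, …, w_{t+1}) be a tuple of nonnegative integers satisfying w_0 + ∑_{n=1}^{t+1} 2^{n−1} w_n = 2^t. Define an E-move on w: for any 0 ≤ t' ≤ t, replace (w_0, …, w_{t'}, w_{t'+1}) by (w_0 ± 1, …, w_{t'} ± 1, w_{t'+1} ∓ 1) provided all resulting entries are nonnegative (keeping later entries fixed). Then there is a finite sequence of E-moves transforming w into (1, 1, …, 1, 0). -/
/-! Every tuple is connected to the tuple concentrated at index `0` carrying its whole weight: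
moving one unit from a nonzero index `t' + 1` down to the indices `0, …, t'` keeps the weight,
since `1 + 1 + 2 + ⋯ + 2^(t'-1) = 2^t'`, and strictly decreases the part of the weight carried by
the indices `≥ 1`. Since E-moves can be undone, two tuples of the same weight are connected. -/

open Finset

/-- An E-move on a tuple `w = (w_0, …, w_{t+1})`: choose `0 ≤ t' ≤ t` and either add `1` to each
of `w_0, …, w_{t'}` and subtract `1` from `w_{t'+1}`, or subtract `1` from each of
`w_0, …, w_{t'}` and add `1` to `w_{t'+1}`, provided all resulting entries are nonnegative. -/
def EMove (t : ℕ) (w w' : Fin (t + 2) → ℕ) : Prop :=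
  ∃ t' : ℕ, ∃ _ : t' ≤ t,
    (((∀ n : Fin (t + 2), (n : ℕ) ≤ t' → w' n = w n + 1) ∧
        w' ⟨t' + 1, by omega⟩ + 1 = w ⟨t' + 1, by omega⟩) ∨
      ((∀ n : Fin (t + 2), (n : ℕ) ≤ t' → w' n + 1 = w n) ∧
        w' ⟨t' + 1, by omega⟩ = w ⟨t' + 1, by omega⟩ + 1)) ∧
    (∀ n : Fin (t + 2), t' + 1 < (n : ℕ) → w' n = w n)

namespace EMove

def weight (n : ℕ) : ℕ := if n = 0 then 1 else 2 ^ (n - 1)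

theorem sum_range_weight (n : ℕ) : ∑ k ∈ range (n + 1), weight k = 2 ^ n := by
  induction n with
  | zero => simp [weight]
  | succ n ih =>
    rw [sum_range_succ, ih, weight, if_neg n.succ_ne_zero, Nat.add_sub_cancel, pow_succ]
    ring

variable {t : ℕ}

def weightedSum (t : ℕ) (w : Fin (t + 2) → ℕ) : ℕ := ∑ n : Fin (t + 2), weight n * w n

theorem weightedSum_eq_zero_add (w : Fin (t + 2) → ℕ) :
    weightedSum t w = w 0 + ∑ i : Fin (t + 1), 2 ^ (i : ℕ) * w i.succ := by
  simp [weightedSum, Fin.sum_univ_succ, weight]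

theorem sum_ite_le_weight {t' : ℕ} (ht' : t' ≤ t) :
    ∑ n : Fin (t + 2), (if (n : ℕ) ≤ t' then weight n else 0) = 2 ^ t' := by
  rw [Fin.sum_univ_eq_sum_range (fun k => if k ≤ t' then weight k else 0), ← sum_filter,
    ← sum_range_weight]
  congr 1
  ext k
  simp only [mem_filter, mem_range]
  omega

theorem sum_ite_eq_weight {t' : ℕ} (ht' : t' ≤ t) :
    ∑ n : Fin (t + 2), (if (n : ℕ) = t' + 1 then weight n else 0) = 2 ^ t' := by
  rw [Fin.sum_univ_eq_sum_range (fun k => if k = t' + 1 then weight k else 0), sum_ite_eq']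
  simp [weight]
  omega

theorem weightedSum_eq_of_raise {w w' : Fin (t + 2) → ℕ} {t' : ℕ} (ht' : t' ≤ t)
    (hlow : ∀ n : Fin (t + 2), (n : ℕ) ≤ t' → w' n = w n + 1)
    (hmid : w' ⟨t' + 1, by omega⟩ + 1 = w ⟨t' + 1, by omega⟩)
    (htail : ∀ n : Fin (t + 2), t' + 1 < (n : ℕ) → w' n = w n) :
    weightedSum t w' = weightedSum t w := by
  have hterm : ∀ n : Fin (t + 2),
      weight n * w' n + (if (n : ℕ) = t' + 1 then weight n else 0) =
        weight n * w n + (if (n : ℕ) ≤ t' then weight n else 0) := by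
    intro n
    by_cases hn : (n : ℕ) ≤ t'
    · simp [hn, hlow n hn, show (n : ℕ) ≠ t' + 1 by omega, mul_add]
    · by_cases hn' : (n : ℕ) = t' + 1
      · rw [show n = ⟨t' + 1, by omega⟩ from Fin.ext hn']
        simp [← hmid, mul_add]
      · simp [hn, hn', htail n (by omega)]
  have hsum := sum_congr rfl fun n (_ : n ∈ univ) => hterm n
  rw [sum_add_distrib, sum_add_distrib, sum_ite_le_weight ht', sum_ite_eq_weight ht'] at hsum
  exact Nat.add_right_cancel hsum

theorem symm {w w' : Fin (t + 2) → ℕ} (h : EMove t w w') : EMove t w' w := by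
  obtain ⟨t', ht', hmove, htail⟩ := h
  refine ⟨t', ht', ?_, fun n hn => (htail n hn).symm⟩
  rcases hmove with ⟨hlow, hmid⟩ | ⟨hlow, hmid⟩
  · exact Or.inr ⟨fun n hn => (hlow n hn).symm, hmid.symm⟩
  · exact Or.inl ⟨fun n hn => (hlow n hn).symm, hmid.symm⟩

instance : Std.Symm (EMove t) := ⟨fun _ _ => symm⟩

theorem weightedSum_eq {w w' : Fin (t + 2) → ℕ} (h : EMove t w w') :
    weightedSum t w' = weightedSum t w := by
  obtain ⟨t', ht', hmove, htail⟩ := h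
  rcases hmove with ⟨hlow, hmid⟩ | ⟨hlow, hmid⟩
  · exact weightedSum_eq_of_raise ht' hlow hmid htail
  · exact (weightedSum_eq_of_raise ht' (fun n hn => (hlow n hn).symm) hmid.symm
      (fun n hn => (htail n hn).symm)).symm

theorem exists_raise_zero_of_pos (w : Fin (t + 2) → ℕ) (i : Fin (t + 1)) (hi : 0 < w i.succ) :
    ∃ w', EMove t w w' ∧ w' 0 = w 0 + 1 := by
  let w' : Fin (t + 2) → ℕ := fun n =>
    if (n : ℕ) ≤ i then w n + 1 else if (n : ℕ) = i + 1 then w n - 1 else w n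
  refine ⟨w', ⟨i, by omega, Or.inl ⟨fun n hn => by simp [w', hn], ?_⟩, fun n hn => ?_⟩,
    by simp [w']⟩
  · simp only [w', show ¬ (i : ℕ) + 1 ≤ i by omega, if_false, if_true]
    exact Nat.sub_add_cancel hi
  · simp [w', show ¬ (n : ℕ) ≤ i by omega, show (n : ℕ) ≠ i + 1 by omega]

theorem reflTransGen_single_zero (w : Fin (t + 2) → ℕ) :
    Relation.ReflTransGen (EMove t) w (Pi.single 0 (weightedSum t w)) := by
  obtain ⟨k, hk⟩ : ∃ k, ∑ i : Fin (t + 1), 2 ^ (i : ℕ) * w i.succ = k := ⟨_, rfl⟩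
  induction k generalizing w with
  | zero =>
    have hsucc : ∀ i : Fin (t + 1), w i.succ = 0 := fun i => by
      simpa using sum_eq_zero_iff.mp hk i (mem_univ i)
    convert Relation.ReflTransGen.refl using 1
    ext n
    cases n using Fin.cases with
    | zero => simp [weightedSum_eq_zero_add, hk]
    | succ i => simp [hsucc i]
  | succ k ih =>
    obtain ⟨i, -, hi⟩ := exists_ne_zero_of_sum_ne_zero (hk.trans_ne k.succ_ne_zero)
    obtain ⟨w', hmove, hw'0⟩ :=
      exists_raise_zero_of_pos w i (Nat.pos_of_ne_zero (right_ne_zero_of_mul hi))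
    have hk' : ∑ i : Fin (t + 1), 2 ^ (i : ℕ) * w' i.succ = k := by
      have := hmove.weightedSum_eq
      rw [weightedSum_eq_zero_add, weightedSum_eq_zero_add] at this
      omega
    exact .head hmove (hmove.weightedSum_eq ▸ ih w' hk')

theorem weightedSum_ones : weightedSum t (fun n => if (n : ℕ) = t + 1 then 0 else 1) = 2 ^ t := by
  rw [weightedSum, Fin.sum_univ_castSucc, ← sum_range_weight, ← Fin.sum_univ_eq_sum_range]
  simp only [Fin.val_castSucc, Fin.val_last, if_pos, mul_zero, add_zero]
  exact sum_congr rfl fun i _ => by simp [i.is_lt.ne]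

end EMove

theorem emove_reaches_ones (t : ℕ) (w : Fin (t + 2) → ℕ)
    (hsum : ∑ n : Fin (t + 2), (if (n : ℕ) = 0 then 1 else 2 ^ ((n : ℕ) - 1)) * w n = 2 ^ t) :
    Relation.ReflTransGen (EMove t) w (fun n => if (n : ℕ) = t + 1 then 0 else 1) := by
  have hw : EMove.weightedSum t w = 2 ^ t := hsum
  have hfrom := EMove.reflTransGen_single_zero w
  have hto := EMove.reflTransGen_single_zero (t := t) (fun n => if (n : ℕ) = t + 1 then 0 else 1)
  rw [hw] at hfrom
  rw [EMove.weightedSum_ones] at hto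
  exact hfrom.trans (Std.Symm.symm _ _ hto)
end

section
/- Suppose P(x) ∈ ℤ[x] has degree N − 1, all coefficients odd, and all roots being roots of unity (i.e., P is cyclotomic). Writing P(x) = c·∏_{d≥1} Φ_d(x)^{e(d)} where Φ_d is the d-th irreducible cyclotomic polynomial, then e(d) = 0 unless d divides 2N. -/
/-!
Reduce modulo 2: since every coefficient of `P` is odd, `P ≡ 1 + X + ⋯ + X ^ (N - 1)`, so each
`Φ_d` dividing `P` divides `X ^ N - 1` over `𝔽₂`. Write `d = 2 ^ k * m` and `N = 2 ^ a * N₀` with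
`m`, `N₀` odd. In characteristic 2 we have `Φ_d = Φ_m ^ φ(2 ^ k)` and
`X ^ N - 1 = (X ^ N₀ - 1) ^ (2 ^ a)` with `X ^ N₀ - 1` separable. Comparing multiplicities at a
primitive `m`-th root of unity `ζ` gives `φ(2 ^ k) ≤ 2 ^ a`, i.e. `k ≤ a + 1`, and `ζ ^ N = 1`
gives `m ∣ N`; hence `d ∣ 2 * N`.
-/

open Polynomial Finset

theorem Nat.le_succ_of_totient_prime_pow_le {p k a : ℕ} (hp : p.Prime)
    (h : totient (p ^ k) ≤ p ^ a) : k ≤ a + 1 := by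
  rcases k with _ | j
  · omega
  rw [totient_prime_pow_succ hp] at h
  have hj : p ^ j ≤ p ^ a := (Nat.le_mul_of_pos_right _ (Nat.sub_pos_of_lt hp.one_lt)).trans h
  exact Nat.succ_le_succ ((Nat.pow_le_pow_iff_right hp.one_lt).mp hj)

theorem Nat.dvd_prime_mul_of_factorization_le {p d N : ℕ} (hp : p.Prime) (hd : d ≠ 0)
    (hm : ordCompl[p] d ∣ N) (hk : d.factorization p ≤ N.factorization p + 1) : d ∣ p * N := by
  have hpk : p ^ d.factorization p ∣ p * N :=
    calc p ^ d.factorization p ∣ p ^ (N.factorization p + 1) := pow_dvd_pow p hk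
      _ = p * ordProj[p] N := by rw [pow_succ']
      _ ∣ p * N := mul_dvd_mul_left p (ordProj_dvd N p)
  rw [← ordProj_mul_ordCompl_eq_self d p]
  exact ((coprime_ordCompl hp hd).pow_left _).mul_dvd_of_dvd_of_dvd hpk (hm.mul_left p)

namespace Polynomial

theorem rootMultiplicity_pow {R : Type*} [CommRing R] [IsDomain R] (f : R[X]) (n : ℕ) (x : R) :
    (f ^ n).rootMultiplicity x = n * f.rootMultiplicity x := by
  classical
  rw [← count_roots, roots_pow, Multiset.count_nsmul, count_roots]

theorem rootMultiplicity_cyclotomic_of_isPrimitiveRoot {K : Type*} [Field K] {m : ℕ}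
    [NeZero (m : K)] {ζ : K} (hζ : IsPrimitiveRoot ζ m) :
    (cyclotomic m K).rootMultiplicity ζ = 1 :=
  le_antisymm (rootMultiplicity_le_one_of_separable (separable_cyclotomic m K) ζ)
    ((rootMultiplicity_pos (cyclotomic_ne_zero m K)).mpr (isRoot_cyclotomic_iff.mpr hζ))

section CharP

variable {K : Type*} [Field K] (p : ℕ) [Fact p.Prime] [CharP K p]

theorem rootMultiplicity_cyclotomic_prime_pow_mul {m : ℕ} [NeZero (m : K)] {ζ : K}
    (hζ : IsPrimitiveRoot ζ m) (k : ℕ) :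
    (cyclotomic (p ^ k * m) K).rootMultiplicity ζ = Nat.totient (p ^ k) := by
  rcases k.eq_zero_or_pos with rfl | hk
  · simp [rootMultiplicity_cyclotomic_of_isPrimitiveRoot hζ]
  rw [cyclotomic_mul_prime_pow_eq K (NeZero.not_char_dvd K p m) hk, rootMultiplicity_pow,
    rootMultiplicity_cyclotomic_of_isPrimitiveRoot hζ, mul_one, Nat.totient_prime_pow Fact.out hk,
    Nat.mul_sub_one, ← pow_succ, Nat.sub_add_cancel hk]

theorem rootMultiplicity_X_pow_sub_one_le (N : ℕ) (x : K) :
    ((X : K[X]) ^ N - 1).rootMultiplicity x ≤ p ^ N.factorization p := by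
  rcases eq_or_ne N 0 with rfl | hN
  · simp
  have hsep : ((X : K[X]) ^ ordCompl[p] N - 1).Separable :=
    X_pow_sub_one_separable_iff.mpr <| by
      rw [Ne, CharP.cast_eq_zero_iff K p]
      exact Nat.not_dvd_ordCompl Fact.out hN
  have hexpand : expand K (p ^ N.factorization p) (X ^ ordCompl[p] N - 1) = X ^ N - 1 := by
    rw [map_sub, map_pow, expand_X, map_one, ← pow_mul, Nat.ordProj_mul_ordCompl_eq_self]
  rw [← hexpand, rootMultiplicity_expand_pow]
  exact mul_le_of_le_one_right (Nat.zero_le _) (rootMultiplicity_le_one_of_separable hsep _)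

theorem dvd_prime_mul_of_cyclotomic_dvd_X_pow_sub_one {d N : ℕ} (hd : d ≠ 0)
    (h : cyclotomic d K ∣ X ^ N - 1) : d ∣ p * N := by
  have hp : p.Prime := Fact.out
  rcases eq_or_ne N 0 with rfl | hN
  · simp
  let L := AlgebraicClosure K
  have hL : cyclotomic d L ∣ X ^ N - 1 := by
    simpa using map_dvd (algebraMap K L) h
  have hXN : (X : L[X]) ^ N - 1 ≠ 0 := X_pow_sub_C_ne_zero (Nat.pos_of_ne_zero hN) 1
  set m := ordCompl[p] d
  have : NeZero (m : L) := ⟨by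
    rw [Ne, CharP.cast_eq_zero_iff L p]
    exact Nat.not_dvd_ordCompl hp hd⟩
  obtain ⟨ζ, hζ⟩ := HasEnoughRootsOfUnity.exists_primitiveRoot L m
  have hmult : Nat.totient (p ^ d.factorization p) ≤ ((X : L[X]) ^ N - 1).rootMultiplicity ζ := by
    rw [← rootMultiplicity_cyclotomic_prime_pow_mul p hζ, Nat.ordProj_mul_ordCompl_eq_self]
    exact rootMultiplicity_le_rootMultiplicity_of_dvd hXN hL ζ
  have hmN : m ∣ N := by
    have hroot : ((X : L[X]) ^ N - 1).IsRoot ζ :=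
      (rootMultiplicity_pos hXN).mp ((Nat.totient_pos.mpr (pow_pos hp.pos _)).trans_le hmult)
    exact hζ.dvd_of_pow_eq_one N (by simpa [sub_eq_zero] using hroot)
  exact Nat.dvd_prime_mul_of_factorization_le hp hd hmN <| Nat.le_succ_of_totient_prime_pow_le hp <|
    hmult.trans (rootMultiplicity_X_pow_sub_one_le p N ζ)

end CharP

theorem map_intCast_eq_geom_sum_of_odd_coeff {R : Type*} [CommRing R] [CharP R 2]
    {P : ℤ[X]} {N : ℕ} (hdeg : P.natDegree < N) (hodd : ∀ n < N, Odd (P.coeff n)) :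
    P.map (Int.castRingHom R) = ∑ i ∈ Finset.range N, X ^ i := by
  ext n
  simp only [coeff_map, finsetSum_coeff, coeff_X_pow, Finset.sum_ite_eq, Finset.mem_range]
  split_ifs with hn
  · obtain ⟨t, ht⟩ := hodd n hn
    simp [ht, CharTwo.two_eq_zero]
  · rw [coeff_eq_zero_of_natDegree_lt (by omega), map_zero]

end Polynomial

theorem cyclotomic_factors_divide_general (N D : ℕ) (hN : 2 ≤ N) (P : Polynomial ℤ) (c : ℤ)
    (e : ℕ → ℕ)
    (hdeg : P.natDegree = N - 1)
    (hodd : ∀ n ≤ N - 1, Odd (P.coeff n))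
    (hfac : P = C c * ∏ d ∈ Finset.Icc 1 D, (cyclotomic d ℤ) ^ e d) :
    ∀ d ∈ Finset.Icc 1 D, e d ≠ 0 → d ∣ 2 * N := by
  intro d hd hed
  have hdvdP : cyclotomic d ℤ ∣ P := hfac ▸ Dvd.dvd.mul_left
    ((dvd_pow_self _ hed).trans (dvd_prod_of_mem (fun i ↦ cyclotomic i ℤ ^ e i) hd)) _
  have hgeom := map_intCast_eq_geom_sum_of_odd_coeff (R := ZMod 2) (N := N) (by omega)
    fun n hn ↦ hodd n (by omega)
  have hdvd : cyclotomic d (ZMod 2) ∣ X ^ N - 1 := by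
    rw [← geom_sum_mul, ← hgeom]
    simpa using (map_dvd (Int.castRingHom (ZMod 2)) hdvdP).mul_right (X - 1)
  exact dvd_prime_mul_of_cyclotomic_dvd_X_pow_sub_one 2 (by grind) hdvd

theorem cyclotomic_factors_divide (N D : ℕ) (hN : 2 ≤ N) (P : Polynomial ℤ) (c : ℤ)
    (e : ℕ → ℕ) (hc : c = 1 ∨ c = -1)
    (hdeg : P.natDegree = N - 1)
    (hodd : ∀ n ≤ N - 1, Odd (P.coeff n))
    (hfac : P = C c * ∏ d ∈ Finset.Icc 1 D, (cyclotomic d ℤ) ^ e d) :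
    ∀ d ∈ Finset.Icc 1 D, e d ≠ 0 → d ∣ 2 * N :=
  cyclotomic_factors_divide_general N D hN P c e hdeg hodd hfac
end

section
/- Let N = 2^t·M with M odd and let P(x) ∈ ℤ[x] have degree N − 1, all coefficients odd, and be a product (up to sign) of irreducible cyclotomic polynomials, P(x) = ±∏_{d | 2N} Φ_d(x)^{e(d)}. Then e(2^{t+1}) = 0. -/
/-!
Reduce modulo 2. Since all coefficients of `P` are odd, `P ≡ 1 + X + ⋯ + X ^ (N - 1)`, so
`(X - 1) P ≡ X ^ N - 1 = (X ^ M - 1) ^ (2 ^ t)`, and because `M` is odd, `1` is a root of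
`X ^ M - 1` of multiplicity exactly one. Hence `(X - 1) ^ (2 ^ t)` does not divide `P` modulo 2,
whereas `Φ_{2 ^ (t + 1)} ≡ (X - 1) ^ (2 ^ t)` would divide it if `e (2 ^ (t + 1))` were positive.
-/

open Polynomial Finset

namespace Polynomial

theorem map_intCastRingHom_zmod_two_eq_geom_sum {P : ℤ[X]} {n : ℕ} (hdeg : P.natDegree < n)
    (hodd : ∀ k < n, Odd (P.coeff k)) :
    P.map (Int.castRingHom (ZMod 2)) = ∑ i ∈ range n, X ^ i := by
  ext k
  simp only [coeff_map, finsetSum_coeff, coeff_X_pow, sum_ite_eq, mem_range, eq_intCast]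
  split_ifs with hk
  · exact ZMod.intCast_eq_one_iff_odd.2 (hodd k hk)
  · rw [coeff_eq_zero_of_natDegree_lt (by omega), Int.cast_zero]

theorem cyclotomic_two_pow_succ_eq_X_sub_one_pow (R : Type*) [Ring R] [CharP R 2] (k : ℕ) :
    cyclotomic (2 ^ (k + 1)) R = (X - 1) ^ 2 ^ k := by
  have := cyclotomic_mul_prime_pow_eq R (p := 2) (m := 1) (by norm_num) k.succ_pos
  rw [mul_one, cyclotomic_one, Nat.succ_sub_one] at this
  rw [this, pow_succ, mul_two, Nat.add_sub_cancel]

section ExpChar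

variable {R : Type*} [CommRing R] [IsDomain R] {p : ℕ} [ExpChar R p]

theorem rootMultiplicity_one_X_pow_sub_one (k : ℕ) {m : ℕ} (hm : (m : R) ≠ 0) :
    rootMultiplicity 1 (X ^ (p ^ k * m) - 1 : R[X]) = p ^ k := by
  set g : R[X] := (∑ i ∈ range m, X ^ i) ^ p ^ k with hg
  have hfrob : (X ^ (p ^ k * m) - 1 : R[X]) = g * (X - C 1) ^ p ^ k := by
    rw [hg, ← mul_pow, map_one, geom_sum_mul, sub_pow_expChar_pow, one_pow, ← pow_mul, mul_comm]
  have hg1 : ¬ g.IsRoot 1 := by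
    simp [hg, eval_geom_sum, hm]
  have hg0 : g ≠ 0 := fun h ↦ hg1 (by simp [h])
  rw [hfrob, rootMultiplicity_mul_X_sub_C_pow hg0, rootMultiplicity_eq_zero hg1, zero_add]

theorem not_X_sub_one_pow_dvd_geom_sum (k : ℕ) {m : ℕ} (hm : (m : R) ≠ 0) :
    ¬ (X - 1 : R[X]) ^ p ^ k ∣ ∑ i ∈ range (p ^ k * m), X ^ i := by
  intro hdvd
  have hne : (X ^ (p ^ k * m) - 1 : R[X]) ≠ 0 := fun h ↦ by
    have := rootMultiplicity_one_X_pow_sub_one (p := p) k hm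
    rw [h, rootMultiplicity_zero] at this
    exact pow_ne_zero k (expChar_pos R p).ne' this.symm
  have hle := (le_rootMultiplicity_iff hne (a := 1) (n := p ^ k + 1)).2 <| by
    rw [map_one, pow_succ, ← geom_sum_mul]
    exact mul_dvd_mul_right hdvd _
  rw [rootMultiplicity_one_X_pow_sub_one (p := p) k hm] at hle
  omega

end ExpChar

end Polynomial

theorem multiplicity_two_pow_succ_eq_zero_general (N t M : ℕ) (hM : Odd M) (hN : N = 2 ^ t * M)
    (P : Polynomial ℤ) (c : ℤ) (e : ℕ → ℕ)
    (hdeg : P.natDegree = N - 1)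
    (hodd : ∀ n ≤ N - 1, Odd (P.coeff n))
    (hfac : P = C c * ∏ d ∈ (2 * N).divisors, (cyclotomic d ℤ) ^ e d) :
    e (2 ^ (t + 1)) = 0 := by
  by_contra he
  have hN0 : N ≠ 0 := hN ▸ mul_ne_zero (by positivity) hM.pos.ne'
  have hmem : 2 ^ (t + 1) ∈ (2 * N).divisors :=
    Nat.mem_divisors.2 ⟨⟨M, by rw [hN]; ring⟩, by omega⟩
  have hdvd : cyclotomic (2 ^ (t + 1)) ℤ ∣ P :=
    hfac ▸ (dvd_pow_self _ he).trans ((dvd_prod_of_mem _ hmem).mul_left _)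
  have hmod := Polynomial.map_dvd (Int.castRingHom (ZMod 2)) hdvd
  rw [map_cyclotomic, cyclotomic_two_pow_succ_eq_X_sub_one_pow,
    map_intCastRingHom_zmod_two_eq_geom_sum (n := N) (by omega) (fun k hk ↦ hodd k (by omega)),
    hN] at hmod
  exact not_X_sub_one_pow_dvd_geom_sum t (ZMod.natCast_ne_zero_iff_odd.2 hM) hmod

theorem multiplicity_two_pow_succ_eq_zero (N t M : ℕ) (hM : Odd M) (hN : N = 2 ^ t * M)
    (hN2 : 2 ≤ N) (P : Polynomial ℤ) (c : ℤ) (hc : c = 1 ∨ c = -1) (e : ℕ → ℕ)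
    (hdeg : P.natDegree = N - 1)
    (hodd : ∀ n ≤ N - 1, Odd (P.coeff n))
    (hfac : P = C c * ∏ d ∈ (2 * N).divisors, (cyclotomic d ℤ) ^ e d) :
    e (2 ^ (t + 1)) = 0 :=
  multiplicity_two_pow_succ_eq_zero_general N t M hM hN P c e hdeg hodd hfac
end
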